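/- arXiv:1209.1796 — 3 statements merged into one kernel-verified Lean document; each statement's English description precedes it below -/
import Mathlib

section
/- Let E be a real Banach space and B ⊆ E a nonempty closed proper subset. Then there exists a point a* ∈ B, an open set U ⊆ E containing a*, and a convex closed set 𝔛 ⊆ E with nonempty interior such that the cone C = {a* + t(x - a*) | x ∈ 𝔛, t ≥ 0} satisfies U ∩ C ∩ B = {a*}. -/
/-!
Take `c ∉ B`. Since `B` is closed, `c` is at positive distance `d` from `B`, but in a Banach space
the distance need not be attained. Ekeland's variational principle, applied to `y ↦ ‖y - c‖` on
`B`, yields instead a point `a ∈ B` that is a strict minimiser of `y ↦ ‖y - c‖ + ‖y - a‖ / 3`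
on `B`. Near `a`, the cone with vertex `a` over the ball `closedBall c (d / 2)` consists of points
on segments `[a, x]` with `x` in that ball; along them `‖· - c‖` decreases faster than this
penalty grows, so the cone meets `B` only at `a`.
-/

open Set Metric Filter

section Ekeland

variable {α : Type*} [MetricSpace α] {f : α → ℝ} {ε r : ℝ} {a b : α}

/-- The lower set of `a` in the Brøndsted order of `f`. -/
def ekelandSet (f : α → ℝ) (ε : ℝ) (a : α) : Set α :=
  {y | f y + ε * dist y a ≤ f a}

theorem mem_ekelandSet_self (a : α) : a ∈ ekelandSet f ε a := by
  simp [ekelandSet]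

theorem ekelandSet_subset (hε : 0 ≤ ε) (hb : b ∈ ekelandSet f ε a) :
    ekelandSet f ε b ⊆ ekelandSet f ε a := fun y hy => by
  have htri : ε * dist y a ≤ ε * dist y b + ε * dist b a := by
    rw [← mul_add]
    exact mul_le_mul_of_nonneg_left (dist_triangle y b a) hε
  simp only [ekelandSet, mem_ofPred_eq] at hb hy ⊢
  linarith

theorem isClosed_ekelandSet (hf : LowerSemicontinuous f) (a : α) :
    IsClosed (ekelandSet f ε a) :=
  (hf.add (continuous_const.mul (continuous_id.dist continuous_const)).lowerSemicontinuous
    ).isClosed_preimage (f a)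

theorem ekelandSet_subset_closedBall (hε : 0 < ε) (hb : b ∈ ekelandSet f ε a)
    (hmin : ∀ y ∈ ekelandSet f ε a, f b ≤ f y + ε * r) :
    ekelandSet f ε b ⊆ closedBall b r := fun y hy => by
  have hya := hmin y (ekelandSet_subset hε.le hb hy)
  simp only [ekelandSet, mem_ofPred_eq] at hy
  exact le_of_mul_le_mul_left (by linarith) hε

theorem exists_mem_forall_le_add {β : Type*} {g : β → ℝ} {s : Set β} {δ : ℝ}
    (hs : s.Nonempty) (hbdd : BddBelow (g '' s)) (hδ : 0 < δ) :
    ∃ b ∈ s, ∀ y ∈ s, g b ≤ g y + δ := by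
  obtain ⟨_, ⟨b, hb, rfl⟩, hlt⟩ := Real.lt_sInf_add_pos (hs.image g) hδ
  refine ⟨b, hb, fun y hy => ?_⟩
  have := csInf_le hbdd (mem_image_of_mem g hy)
  linarith

/-- Ekeland's variational principle. -/
theorem exists_forall_lt_add_mul_dist [CompleteSpace α] [Nonempty α]
    (hf : LowerSemicontinuous f) (hbdd : BddBelow (range f)) (hε : 0 < ε) :
    ∃ a, ∀ y, y ≠ a → f a < f y + ε * dist y a := by
  obtain ⟨x₀⟩ := ‹Nonempty α›
  have exists_next : ∀ (n : ℕ) (a : α), ∃ b ∈ ekelandSet f ε a,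
      ∀ y ∈ ekelandSet f ε a, f b ≤ f y + ε * (1 / (n + 1)) := fun n a =>
    exists_mem_forall_le_add ⟨a, mem_ekelandSet_self a⟩ (hbdd.mono (image_subset_range _ _))
      (by positivity)
  choose next hnext_mem hnext_le using exists_next
  let u : ℕ → α := fun n => Nat.rec x₀ next n
  let K : ℕ → Set α := fun n => ekelandSet f ε (u n)
  have hK_anti : Antitone K :=
    antitone_nat_of_succ_le fun n => ekelandSet_subset hε.le (hnext_mem n (u n))
  have hK_ball : ∀ n : ℕ, K (n + 1) ⊆ closedBall (u (n + 1)) (1 / (n + 1)) := fun n =>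
    ekelandSet_subset_closedBall hε (hnext_mem n (u n)) (hnext_le n (u n))
  have hu_mem : ∀ n m, n ≤ m → u m ∈ K n := fun n m h => hK_anti h (mem_ekelandSet_self _)
  have hcauchy : CauchySeq u := by
    refine Metric.cauchySeq_iff'.2 fun δ hδ => ?_
    obtain ⟨N, hN⟩ := exists_nat_one_div_lt hδ
    exact ⟨N + 1, fun m hm => (hK_ball N (hu_mem _ _ hm)).trans_lt hN⟩
  obtain ⟨a, ha⟩ := cauchySeq_tendsto_of_complete hcauchy
  have haK : ∀ n, a ∈ K n := fun n =>
    (isClosed_ekelandSet hf _).mem_of_tendsto ha (eventually_atTop.2 ⟨n, hu_mem n⟩)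
  refine ⟨a, fun y hya => ?_⟩
  by_contra hy
  have hyK : ∀ n, y ∈ K n := fun n =>
    ekelandSet_subset hε.le (haK n) (by simpa [ekelandSet] using hy)
  refine hya (eq_of_forall_dist_le fun δ hδ => ?_)
  obtain ⟨N, hN⟩ := exists_nat_one_div_lt (half_pos hδ)
  calc dist y a ≤ dist y (u (N + 1)) + dist a (u (N + 1)) := dist_triangle_right _ _ _
    _ ≤ δ / 2 + δ / 2 :=
      add_le_add ((hK_ball N (hyK (N + 1))).trans hN.le) ((hK_ball N (haK (N + 1))).trans hN.le)
    _ = δ := add_halves δ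

theorem IsClosed.exists_forall_lt_add_mul_dist [CompleteSpace α] {B : Set α} (hB : IsClosed B)
    (hBne : B.Nonempty) (hf : LowerSemicontinuous f) (hbdd : BddBelow (f '' B)) (hε : 0 < ε) :
    ∃ a ∈ B, ∀ y ∈ B, y ≠ a → f a < f y + ε * dist y a := by
  have : CompleteSpace B := hB.isComplete.completeSpace_coe
  have : Nonempty B := hBne.to_subtype
  obtain ⟨a, ha⟩ := _root_.exists_forall_lt_add_mul_dist (hf.comp continuous_subtype_val)
    (by rwa [range_comp, Subtype.range_coe]) hε
  exact ⟨a, a.2, fun y hy hya => ha ⟨y, hy⟩ (Subtype.coe_ne_coe.1 hya)⟩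

end Ekeland

section Cone

variable {E : Type*} [NormedAddCommGroup E] [NormedSpace ℝ E] {a c x : E} {t ε ρ : ℝ}

theorem norm_add_smul_sub_sub_le (hx : ‖x - c‖ ≤ ρ) (ht₀ : 0 ≤ t) (ht₁ : t ≤ 1) (hε : 0 ≤ ε)
    (hρ : (1 + ε) * ρ ≤ (1 - ε) * ‖a - c‖) :
    ‖a + t • (x - a) - c‖ + ε * ‖a + t • (x - a) - a‖ ≤ ‖a - c‖ := by
  have hseg : ‖a + t • (x - a) - c‖ ≤ (1 - t) * ‖a - c‖ + t * ρ :=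
    calc ‖a + t • (x - a) - c‖ = ‖(1 - t) • (a - c) + t • (x - c)‖ := by congr 1; module
      _ ≤ (1 - t) * ‖a - c‖ + t * ‖x - c‖ := by
        refine (norm_add_le _ _).trans_eq ?_
        rw [norm_smul, norm_smul, Real.norm_of_nonneg (sub_nonneg.2 ht₁), Real.norm_of_nonneg ht₀]
      _ ≤ (1 - t) * ‖a - c‖ + t * ρ := by gcongr
  have hstep : ‖a + t • (x - a) - a‖ ≤ t * (‖a - c‖ + ρ) := by
    rw [add_sub_cancel_left, norm_smul, Real.norm_of_nonneg ht₀]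
    gcongr
    linarith [norm_sub_le_norm_sub_add_norm_sub x c a, norm_sub_rev c a]
  linarith [mul_le_mul_of_nonneg_left hstep hε, mul_le_mul_of_nonneg_left hρ ht₀]

theorem lt_one_of_norm_smul_sub_lt (hx : ‖x - c‖ ≤ ρ) (ht₀ : 0 ≤ t)
    (ht : ‖t • (x - a)‖ < ‖a - c‖ - ρ) : t < 1 := by
  have hxa : ‖a - c‖ - ρ ≤ ‖x - a‖ := by
    linarith [norm_sub_le_norm_sub_add_norm_sub a x c, norm_sub_rev a x]
  rw [norm_smul, Real.norm_of_nonneg ht₀] at ht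
  exact lt_of_mul_lt_mul_right (by linarith) (norm_nonneg (x - a))

theorem ball_inter_cone_inter_eq_singleton {B : Set E} (haB : a ∈ B) (hε : 0 ≤ ε) (hρ₀ : 0 ≤ ρ)
    (hρa : ρ < ‖a - c‖) (hρ : (1 + ε) * ρ ≤ (1 - ε) * ‖a - c‖)
    (hmin : ∀ y ∈ B, y ≠ a → ‖a - c‖ < ‖y - c‖ + ε * ‖y - a‖) :
    ball a (‖a - c‖ - ρ) ∩ {y | ∃ x ∈ closedBall c ρ, ∃ t : ℝ, 0 ≤ t ∧ y = a + t • (x - a)} ∩ B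
      = {a} := by
  refine eq_singleton_iff_unique_mem.2
    ⟨⟨⟨mem_ball_self (sub_pos.2 hρa), c, mem_closedBall_self hρ₀, 0, le_rfl, by simp⟩, haB⟩, ?_⟩
  rintro _ ⟨⟨hyU, x, hx, t, ht₀, rfl⟩, hyB⟩
  by_contra hya
  rw [mem_closedBall, dist_eq_norm] at hx
  rw [mem_ball, dist_eq_norm, add_sub_cancel_left] at hyU
  have ht₁ := lt_one_of_norm_smul_sub_lt hx ht₀ hyU
  linarith [hmin _ hyB hya, norm_add_smul_sub_sub_le hx ht₀ ht₁.le hε hρ]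

end Cone

theorem exists_cone_touching_closed_set {E : Type*} [NormedAddCommGroup E]
    [NormedSpace ℝ E] [CompleteSpace E]
    (B : Set E) (hBne : B.Nonempty) (hBclosed : IsClosed B) (hBproper : B ≠ Set.univ) :
    ∃ a_star ∈ B, ∃ U : Set E, IsOpen U ∧ a_star ∈ U ∧
      ∃ 𝔛 : Set E, Convex ℝ 𝔛 ∧ IsClosed 𝔛 ∧ (interior 𝔛).Nonempty ∧
        U ∩ {y : E | ∃ x ∈ 𝔛, ∃ t : ℝ, 0 ≤ t ∧ y = a_star + t • (x - a_star)} ∩ B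
          = {a_star} := by
  obtain ⟨c, hcB⟩ := (ne_univ_iff_exists_notMem B).1 hBproper
  set d := infDist c B
  have hd : 0 < d := (hBclosed.notMem_iff_infDist_pos hBne).1 hcB
  obtain ⟨a, haB, hmin⟩ := hBclosed.exists_forall_lt_add_mul_dist hBne
    (continuous_id.sub continuous_const).norm.lowerSemicontinuous
    (f := fun y => ‖y - c‖) ⟨0, by rintro _ ⟨y, -, rfl⟩; positivity⟩ (ε := 1 / 3) (by norm_num)
  have hda : d ≤ ‖a - c‖ := by
    rw [← dist_eq_norm, dist_comm]
    exact infDist_le_dist_of_mem haB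
  refine ⟨a, haB, ball a (‖a - c‖ - d / 2), isOpen_ball, mem_ball_self (by linarith),
    closedBall c (d / 2), convex_closedBall _ _, isClosed_closedBall,
    ⟨c, ball_subset_interior_closedBall (mem_ball_self (half_pos hd))⟩, ?_⟩
  exact ball_inter_cone_inter_eq_singleton (ε := 1 / 3) haB (by norm_num) (half_pos hd).le
    (by linarith) (by linarith) fun y hy hya => by simpa [dist_eq_norm] using hmin y hy hya
end

section
/- Let E be a real topological vector space, ℓ : E → ℝ a nonzero continuous linear functional, a₁ ∈ E, and C a cone with vertex a₁ over a bounded convex set 𝔛 with ℓ(x) > ℓ(a₁) for all x ∈ 𝔛. For d > 0, the truncated cone C ∩ {x | ℓ(x) ≤ ℓ(a₁) + d} is bounded. -/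
/-!
Writing a point of the cone as `y = a₁ + t • (x - a₁)` with `x ∈ 𝔛`, `t ≥ 0`, we get
`ℓ y - ℓ a₁ = t (ℓ x - ℓ a₁) ≥ t β`, so on the truncated cone `t ≤ d / β`. Hence the truncated
cone lies in `a₁ + [-d/β, d/β] • (𝔛 - a₁)`, and a bounded set of scalars times a bounded set is
bounded: a balanced neighbourhood `V` with `𝔛 - a₁ ⊆ c • V` also gives `b • (𝔛 - a₁) ⊆ b c • V`.
-/

open Bornology Set Pointwise

section

variable {𝕜 E : Type*} [NontriviallyNormedField 𝕜] [AddCommGroup E] [Module 𝕜 E]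

theorem Absorbs.closedBall_smul {A B : Set E} (hA : Balanced 𝕜 A) (h : Absorbs 𝕜 A B) (r : ℝ) :
    Absorbs 𝕜 A (Metric.closedBall (0 : 𝕜) r • B) := by
  obtain ⟨R, -, hR⟩ := h.exists_pos
  obtain ⟨c₀, hc₀⟩ := NormedField.exists_lt_norm 𝕜 R
  refine absorbs_iff_norm.mpr ⟨r * ‖c₀‖, fun c hc => ?_⟩
  rintro _ ⟨b, hb, y, hy, rfl⟩
  obtain ⟨a, ha, rfl⟩ := hR c₀ hc₀.le hy
  have hbc₀ : ‖b * c₀‖ ≤ ‖c‖ := by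
    rw [norm_mul]
    exact (mul_le_mul_of_nonneg_right (mem_closedBall_zero_iff.mp hb) (norm_nonneg _)).trans hc
  simpa only [smul_smul] using hA.smul_mono hbc₀ (smul_mem_smul_set ha)

theorem Bornology.IsVonNBounded.closedBall_smul [TopologicalSpace E] [ContinuousSMul 𝕜 E]
    {s : Set E} (hs : IsVonNBounded 𝕜 s) (r : ℝ) :
    IsVonNBounded 𝕜 (Metric.closedBall (0 : 𝕜) r • s) :=
  (nhds_basis_balanced 𝕜 E).isVonNBounded_iff.mpr fun _ ⟨hV, hVb⟩ =>
    (hs hV).closedBall_smul hVb r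

end

theorem truncated_cone_bounded_general {E : Type*} [AddCommGroup E] [Module ℝ E]
    [TopologicalSpace E] [IsTopologicalAddGroup E] [ContinuousSMul ℝ E]
    (l : E →L[ℝ] ℝ) (a₁ : E)
    (𝔛 : Set E) (h𝔛bdd : Bornology.IsVonNBounded ℝ 𝔛)
    (β : ℝ) (hβ : 0 < β) (hlow : ∀ x ∈ 𝔛, l a₁ + β ≤ l x)
    (d : ℝ) :
    Bornology.IsVonNBounded ℝ
      ({y : E | ∃ x ∈ 𝔛, ∃ t : ℝ, 0 ≤ t ∧ y = a₁ + t • (x - a₁)} ∩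
        {x : E | l x ≤ l a₁ + d}) := by
  refine ((h𝔛bdd.vadd (-a₁)).closedBall_smul (d / β) |>.vadd a₁).subset ?_
  rintro _ ⟨⟨x, hx, t, ht, rfl⟩, hy⟩
  have hly : l (a₁ + t • (x - a₁)) = l a₁ + t * (l x - l a₁) := by
    simp only [map_add, map_smul, map_sub, smul_eq_mul]
  have htβ : t * β ≤ d := by
    have := mul_le_mul_of_nonneg_left (le_sub_iff_add_le'.mpr (hlow x hx)) ht
    simp only [mem_ofPred_eq, hly] at hy
    linarith
  refine ⟨_, ⟨t, ?_, _, ⟨x, hx, rfl⟩, rfl⟩, ?_⟩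
  · rw [mem_closedBall_zero_iff, Real.norm_of_nonneg ht, le_div_iff₀ hβ]
    exact htβ
  · simp only [vadd_eq_add, neg_add_eq_sub]

theorem truncated_cone_bounded {E : Type*} [AddCommGroup E] [Module ℝ E]
    [TopologicalSpace E] [IsTopologicalAddGroup E] [ContinuousSMul ℝ E]
    (l : E →L[ℝ] ℝ) (hl : l ≠ 0) (a₁ : E)
    (𝔛 : Set E) (h𝔛conv : Convex ℝ 𝔛) (h𝔛bdd : Bornology.IsVonNBounded ℝ 𝔛)
    (β : ℝ) (hβ : 0 < β) (hlow : ∀ x ∈ 𝔛, l a₁ + β ≤ l x)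
    (d : ℝ) (hd : 0 < d) :
    Bornology.IsVonNBounded ℝ
      ({y : E | ∃ x ∈ 𝔛, ∃ t : ℝ, 0 ≤ t ∧ y = a₁ + t • (x - a₁)} ∩
        {x : E | l x ≤ l a₁ + d}) :=
  truncated_cone_bounded_general l a₁ 𝔛 h𝔛bdd β hβ hlow d
end

section
/- The Lie algebra generated by the four vector fields cos θ ∂_θ, sin θ ∂_θ, cos 2θ ∂_θ, sin 2θ ∂_θ inside Vec(S¹) (with bracket [v, ω] = v'ω - ω'v) contains ∂_θ and cos nθ ∂_θ, sin nθ ∂_θ for every natural number n ≥ 1; in particular its closure spans a dense subspace of Vec(S¹). -/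
/-!
The brackets `[cos mθ, cos θ]` and `[cos mθ, sin θ]` involve only the frequencies `m + 1` and
`m - 1`, the coefficient of frequency `m + 1` being nonzero as soon as `m ≠ 1`. Starting from the
frequencies `1` and `2` this climbs to every frequency, and `[sin θ, cos θ] = 1` gives the
constants. So every real trigonometric polynomial lies in the generated Lie algebra. These are
uniformly dense among continuous `2π`-periodic functions, since they are the real parts of the
complex trigonometric polynomials, which are dense in `C(ℝ/2πℤ, ℂ)`.
-/

/-- The Lie bracket on vector fields on the circle, viewed as functions,
`[v, ω] = v'ω - ω'v`. -/
noncomputable def vfBracket (v w : ℝ → ℝ) : ℝ → ℝ :=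
  fun θ => deriv v θ * w θ - deriv w θ * v θ

/-- The generating set `{cos θ, sin θ, cos 2θ, sin 2θ}`. -/
noncomputable def genSet : Set (ℝ → ℝ) :=
  {fun θ => Real.cos θ, fun θ => Real.sin θ,
   fun θ => Real.cos (2 * θ), fun θ => Real.sin (2 * θ)}

/-- The Lie algebra generated by `genSet`: the smallest linear subspace of functions
containing `genSet` and closed under the bracket. -/
noncomputable def generatedLieAlgebra : Submodule ℝ (ℝ → ℝ) :=
  sInf {L : Submodule ℝ (ℝ → ℝ) |
    genSet ⊆ (L : Set (ℝ → ℝ)) ∧ ∀ v ∈ L, ∀ w ∈ L, vfBracket v w ∈ L}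

open Real Function

noncomputable def cosMul (a : ℝ) : ℝ → ℝ := fun θ => cos (a * θ)

noncomputable def sinMul (a : ℝ) : ℝ → ℝ := fun θ => sin (a * θ)

lemma hasDerivAt_cosMul (a θ : ℝ) : HasDerivAt (cosMul a) (-(a * sin (a * θ))) θ := by
  unfold cosMul
  simpa [mul_comm] using ((hasDerivAt_id θ).const_mul a).cos

lemma hasDerivAt_sinMul (a θ : ℝ) : HasDerivAt (sinMul a) (a * cos (a * θ)) θ := by
  unfold sinMul
  simpa [mul_comm] using ((hasDerivAt_id θ).const_mul a).sin

lemma cosMul_zero : cosMul 0 = fun _ => 1 := by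
  funext θ
  simp [cosMul]

lemma sinMul_zero : sinMul 0 = 0 := by
  funext θ
  simp [sinMul]

lemma cosMul_neg (a : ℝ) : cosMul (-a) = cosMul a := by
  funext θ
  simp [cosMul]

lemma sinMul_neg (a : ℝ) : sinMul (-a) = -sinMul a := by
  funext θ
  simp [sinMul]

lemma vfBracket_cosMul_cosMul (a b : ℝ) :
    vfBracket (cosMul a) (cosMul b) =
      ((b - a) / 2) • sinMul (a + b) - ((a + b) / 2) • sinMul (a - b) := by
  funext θ
  simp only [vfBracket, (hasDerivAt_cosMul _ θ).deriv, Pi.sub_apply, Pi.smul_apply, smul_eq_mul,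
    cosMul, sinMul, add_mul, sub_mul, sin_add, sin_sub]
  ring

lemma vfBracket_cosMul_sinMul (a b : ℝ) :
    vfBracket (cosMul a) (sinMul b) =
      ((a - b) / 2) • cosMul (a + b) - ((a + b) / 2) • cosMul (a - b) := by
  funext θ
  simp only [vfBracket, (hasDerivAt_cosMul _ θ).deriv, (hasDerivAt_sinMul _ θ).deriv, Pi.sub_apply,
    Pi.smul_apply, smul_eq_mul, cosMul, sinMul, add_mul, sub_mul, cos_add, cos_sub]
  ring

section BracketClosed

variable {L : Submodule ℝ (ℝ → ℝ)} (hL : ∀ v ∈ L, ∀ w ∈ L, vfBracket v w ∈ L)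
include hL

lemma cosMul_sinMul_add_one_mem {m : ℝ} (hm : m ≠ 1) (h1 : cosMul 1 ∈ L ∧ sinMul 1 ∈ L)
    (hprev : cosMul (m - 1) ∈ L ∧ sinMul (m - 1) ∈ L) (hcur : cosMul m ∈ L) :
    cosMul (m + 1) ∈ L ∧ sinMul (m + 1) ∈ L := by
  have hm' : m - 1 ≠ 0 := sub_ne_zero.2 hm
  have hcos : cosMul (m + 1) =
      (2 / (m - 1)) • vfBracket (cosMul m) (sinMul 1) + ((m + 1) / (m - 1)) • cosMul (m - 1) := by
    rw [vfBracket_cosMul_sinMul]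
    match_scalars <;> field_simp
    ring
  have hsin : sinMul (m + 1) =
      (2 / (1 - m)) • vfBracket (cosMul m) (cosMul 1) + ((m + 1) / (1 - m)) • sinMul (m - 1) := by
    rw [vfBracket_cosMul_cosMul]
    match_scalars <;> field_simp
    ring
  rw [hcos, hsin]
  exact ⟨L.add_mem (L.smul_mem _ (hL _ hcur _ h1.2)) (L.smul_mem _ hprev.1),
    L.add_mem (L.smul_mem _ (hL _ hcur _ h1.1)) (L.smul_mem _ hprev.2)⟩

lemma cosMul_sinMul_natCast_mem (h1 : cosMul 1 ∈ L ∧ sinMul 1 ∈ L)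
    (h2 : cosMul 2 ∈ L ∧ sinMul 2 ∈ L) {n : ℕ} (hn : 1 ≤ n) : cosMul n ∈ L ∧ sinMul n ∈ L := by
  suffices h : ∀ k : ℕ, 1 ≤ k →
      (cosMul k ∈ L ∧ sinMul k ∈ L) ∧ (cosMul (k + 1) ∈ L ∧ sinMul (k + 1) ∈ L) from
    (h n hn).1
  intro k hk
  induction k, hk using Nat.le_induction with
  | base => exact ⟨by simpa using h1, by norm_num [h2]⟩
  | succ k hk ih =>
    have hk' : (k + 1 : ℝ) ≠ 1 := by norm_cast; omega
    push_cast
    exact ⟨ih.2, cosMul_sinMul_add_one_mem hL hk' h1 (by simpa using ih.1) ih.2.1⟩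

end BracketClosed

lemma genSet_subset_generatedLieAlgebra : genSet ⊆ generatedLieAlgebra :=
  fun _ hv => Submodule.mem_sInf.2 fun _ hL => hL.1 hv

lemma vfBracket_mem_generatedLieAlgebra {v w : ℝ → ℝ} (hv : v ∈ generatedLieAlgebra)
    (hw : w ∈ generatedLieAlgebra) : vfBracket v w ∈ generatedLieAlgebra :=
  Submodule.mem_sInf.2 fun L hL =>
    hL.2 v (Submodule.mem_sInf.1 hv L hL) w (Submodule.mem_sInf.1 hw L hL)

lemma genSet_eq : genSet = {cosMul 1, sinMul 1, cosMul 2, sinMul 2} := by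
  unfold genSet cosMul sinMul
  simp only [one_mul]

lemma cosMul_sinMul_one_two_mem_generatedLieAlgebra :
    (cosMul 1 ∈ generatedLieAlgebra ∧ sinMul 1 ∈ generatedLieAlgebra) ∧
      (cosMul 2 ∈ generatedLieAlgebra ∧ sinMul 2 ∈ generatedLieAlgebra) := by
  have h := genSet_subset_generatedLieAlgebra
  simp only [genSet_eq, Set.insert_subset_iff, Set.singleton_subset_iff, SetLike.mem_coe] at h
  exact ⟨⟨h.1, h.2.1⟩, h.2.2⟩

lemma one_mem_generatedLieAlgebra : (fun _ : ℝ => (1 : ℝ)) ∈ generatedLieAlgebra := by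
  have h : (fun _ : ℝ => (1 : ℝ)) = (-1 : ℝ) • vfBracket (cosMul 1) (sinMul 1) := by
    funext θ
    simp [vfBracket_cosMul_sinMul, cosMul]
  rw [h]
  obtain ⟨⟨hcos, hsin⟩, -⟩ := cosMul_sinMul_one_two_mem_generatedLieAlgebra
  exact generatedLieAlgebra.smul_mem _ (vfBracket_mem_generatedLieAlgebra hcos hsin)

lemma cosMul_sinMul_natCast_mem_generatedLieAlgebra {n : ℕ} (hn : 1 ≤ n) :
    cosMul n ∈ generatedLieAlgebra ∧ sinMul n ∈ generatedLieAlgebra :=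
  cosMul_sinMul_natCast_mem (fun _ hv _ hw => vfBracket_mem_generatedLieAlgebra hv hw)
    cosMul_sinMul_one_two_mem_generatedLieAlgebra.1
    cosMul_sinMul_one_two_mem_generatedLieAlgebra.2 hn

lemma cosMul_sinMul_intCast_mem_generatedLieAlgebra (n : ℤ) :
    cosMul n ∈ generatedLieAlgebra ∧ sinMul n ∈ generatedLieAlgebra := by
  have hnat (k : ℕ) : cosMul k ∈ generatedLieAlgebra ∧ sinMul k ∈ generatedLieAlgebra := by
    rcases k with _ | k
    · rw [Nat.cast_zero, cosMul_zero, sinMul_zero]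
      exact ⟨one_mem_generatedLieAlgebra, generatedLieAlgebra.zero_mem⟩
    · exact cosMul_sinMul_natCast_mem_generatedLieAlgebra k.succ_pos
  obtain ⟨k, rfl | rfl⟩ := Int.eq_nat_or_neg n
  · exact_mod_cast hnat k
  · rw [Int.cast_neg, Int.cast_natCast, cosMul_neg, sinMul_neg]
    exact ⟨(hnat k).1, neg_mem (hnat k).2⟩

lemma fourier_coe_apply_two_pi (n : ℤ) (θ : ℝ) :
    fourier n (θ : AddCircle (2 * π)) = Complex.exp ((n * θ : ℝ) * Complex.I) := by
  rw [fourier_coe_apply]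
  congr 1
  push_cast
  field_simp

lemma re_mem_and_im_mem_of_mem_span_fourier (L : Submodule ℝ (ℝ → ℝ))
    (hL : ∀ n : ℤ, cosMul n ∈ L ∧ sinMul n ∈ L) {p : C(AddCircle (2 * π), ℂ)}
    (hp : p ∈ Submodule.span ℂ (Set.range fourier)) :
    (fun θ : ℝ => (p θ).re) ∈ L ∧ (fun θ : ℝ => (p θ).im) ∈ L := by
  induction hp using Submodule.span_induction with
  | mem q hq =>
    obtain ⟨n, rfl⟩ := hq
    simp only [fourier_coe_apply_two_pi, Complex.exp_ofReal_mul_I_re, Complex.exp_ofReal_mul_I_im]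
    exact hL n
  | zero => exact ⟨L.zero_mem, L.zero_mem⟩
  | add q r _ _ hq hr => exact ⟨L.add_mem hq.1 hr.1, L.add_mem hq.2 hr.2⟩
  | smul c q _ hq =>
    have hre : (fun θ : ℝ => ((c • q) θ).re) =
        c.re • (fun θ : ℝ => (q θ).re) - c.im • (fun θ : ℝ => (q θ).im) := by
      funext θ
      simp
    have him : (fun θ : ℝ => ((c • q) θ).im) =
        c.re • (fun θ : ℝ => (q θ).im) + c.im • (fun θ : ℝ => (q θ).re) := by
      funext θ
      simp
    rw [hre, him]
    exact ⟨L.sub_mem (L.smul_mem _ hq.1) (L.smul_mem _ hq.2),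
      L.add_mem (L.smul_mem _ hq.2) (L.smul_mem _ hq.1)⟩

lemma exists_forall_abs_sub_lt_of_trig_mem (L : Submodule ℝ (ℝ → ℝ))
    (hL : ∀ n : ℤ, cosMul n ∈ L ∧ sinMul n ∈ L) {f : ℝ → ℝ} (hf : Continuous f)
    (hper : Periodic f (2 * π)) {ε : ℝ} (hε : 0 < ε) :
    ∃ g ∈ L, ∀ x, |f x - g x| < ε := by
  have : Fact (0 < 2 * π) := ⟨by positivity⟩
  let F : C(AddCircle (2 * π), ℂ) :=
    ⟨fun x => (hper.lift x : ℂ), Complex.continuous_ofReal.comp (hf.quotient_liftOn' _)⟩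
  have hF : F ∈ (Submodule.span ℂ (Set.range fourier)).topologicalClosure := by
    rw [span_fourier_closure_eq_top]; trivial
  obtain ⟨p, hp, hFp⟩ := Metric.mem_closure_iff.1 hF ε hε
  refine ⟨_, (re_mem_and_im_mem_of_mem_span_fourier L hL hp).1, fun x => ?_⟩
  calc |f x - (p x).re| = |(F x - p x).re| := by simp [F, hper.lift_coe]
    _ ≤ ‖F x - p x‖ := Complex.abs_re_le_norm _
    _ ≤ ‖F - p‖ := (F - p).norm_coe_le_norm x
    _ < ε := by rwa [← dist_eq_norm]

theorem generated_algebra_contains_trig_and_is_dense :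
    ((fun _ : ℝ => (1 : ℝ)) ∈ generatedLieAlgebra) ∧
      (∀ n : ℕ, 1 ≤ n →
        (fun θ : ℝ => Real.cos (n * θ)) ∈ generatedLieAlgebra ∧
        (fun θ : ℝ => Real.sin (n * θ)) ∈ generatedLieAlgebra) ∧
      (∀ f : ℝ → ℝ, Continuous f → (∀ x, f (x + 2 * Real.pi) = f x) →
        ∀ ε : ℝ, 0 < ε → ∃ g ∈ generatedLieAlgebra, ∀ x : ℝ, |f x - g x| < ε) :=
  ⟨one_mem_generatedLieAlgebra, fun _ hn => cosMul_sinMul_natCast_mem_generatedLieAlgebra hn,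
    fun _ hf hper _ hε => exists_forall_abs_sub_lt_of_trig_mem _
      cosMul_sinMul_intCast_mem_generatedLieAlgebra hf hper hε⟩
end
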